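/- arXiv:1202.3276 — 2 statements merged into one kernel-verified Lean document; each statement's English description precedes it below -/
import Mathlib

section
/- Let Γ be a connected graph of finite treewidth and uniformly bounded vertex degree. Then there exists k ∈ ℕ such that: for every one-sided infinite simple path γ in Γ, every vertex v₀ ∈ V(Γ), and every n ∈ ℕ, there is a k-cut D with v₀ ∈ D, d(v₀, D*) ≥ n, and |D* ∩ γ| = ∞. -/
open Pointwise

universe u

namespace CFGroups

variable {V : Type u}

/-- The edge boundary of `C`: adjacent ordered pairs `(u,v)` with `u ∈ C`, `v ∉ C`.
These are in canonical bijection with the undirected edges of `δC`. -/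
def edgeBoundary (G : SimpleGraph V) (C : Set V) : Set (V × V) :=
  {p : V × V | G.Adj p.1 p.2 ∧ p.1 ∈ C ∧ p.2 ∉ C}

/-- The vertex boundary `βC`: endpoints of edges of `δC`. -/
def vertexBoundary (G : SimpleGraph V) (C : Set V) : Set V :=
  {u : V | ∃ v : V, G.Adj u v ∧ ((u ∈ C ∧ v ∉ C) ∨ (v ∈ C ∧ u ∉ C))}

/-- A cut: `C` and its complement are nonempty and connected, and `δC` is finite. -/
def IsCut (G : SimpleGraph V) (C : Set V) : Prop :=
  C.Nonempty ∧ Cᶜ.Nonempty ∧ (G.induce C).Connected ∧ (G.induce Cᶜ).Connected ∧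
    (edgeBoundary G C).Finite

/-- The weight `|δC|` of a cut. -/
noncomputable def weight (G : SimpleGraph V) (C : Set V) : ℕ :=
  (edgeBoundary G C).ncard

/-- A `k`-cut: a cut of weight at most `k`. -/
def IsCutLe (G : SimpleGraph V) (k : ℕ) (C : Set V) : Prop :=
  IsCut G C ∧ weight G C ≤ k

/-- Two cuts are nested. -/
def Nested (C D : Set V) : Prop :=
  C ⊆ D ∨ C ⊆ Dᶜ ∨ Cᶜ ⊆ D ∨ Cᶜ ⊆ Dᶜ

/-- A bi-infinite simple path, as an injective `ℤ`-indexed sequence of successively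
adjacent vertices. -/
def IsBiInfinitePath (G : SimpleGraph V) (α : ℤ → V) : Prop :=
  Function.Injective α ∧ ∀ i : ℤ, G.Adj (α i) (α (i + 1))

/-- A one-sided infinite simple path. -/
def IsRayPath (G : SimpleGraph V) (γ : ℕ → V) : Prop :=
  Function.Injective γ ∧ ∀ i : ℕ, G.Adj (γ i) (γ (i + 1))

/-- `C(α)`: the cuts splitting the bi-infinite simple path `α` into two infinite pieces. -/
def cutsSplitting (G : SimpleGraph V) (α : ℤ → V) : Set (Set V) :=
  {C : Set V | IsCut G C ∧ (Set.range α ∩ C).Infinite ∧ (Set.range α ∩ Cᶜ).Infinite}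

/-- `C_min(α)`: the cuts of minimal weight in `C(α)`. -/
def cutsMin (G : SimpleGraph V) (α : ℤ → V) : Set (Set V) :=
  {C ∈ cutsSplitting G α | ∀ D ∈ cutsSplitting G α, weight G C ≤ weight G D}

/-- `Γ` is accessible with constant `k`: every bi-infinite simple path with `C(α) ≠ ∅`
admits a `k`-cut in `C(α)`. -/
def AccessibleWith (G : SimpleGraph V) (k : ℕ) : Prop :=
  ∀ α : ℤ → V, IsBiInfinitePath G α → (cutsSplitting G α).Nonempty →
    ∃ C ∈ cutsSplitting G α, weight G C ≤ k

/-- An accessible graph. -/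
def Accessible (G : SimpleGraph V) : Prop := ∃ k : ℕ, AccessibleWith G k

/-- `m(C)`: the number of `k`-cuts not nested with `C`. -/
noncomputable def mdeg (G : SimpleGraph V) (k : ℕ) (C : Set V) : ℕ :=
  Set.ncard {D : Set V | IsCutLe G k D ∧ ¬ Nested C D}

/-- `C_opt(α)`: the cuts of `C_min(α)` minimizing `m`. -/
def cutsOpt (G : SimpleGraph V) (k : ℕ) (α : ℤ → V) : Set (Set V) :=
  {C ∈ cutsMin G α | ∀ D ∈ cutsMin G α, mdeg G k C ≤ mdeg G k D}

/-- `C_opt`: the optimally nested cuts. -/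
def COpt (G : SimpleGraph V) (k : ℕ) : Set (Set V) :=
  {C : Set V | ∃ α : ℤ → V, IsBiInfinitePath G α ∧ C ∈ cutsOpt G k α}

/-- The relation `C ∼ D` on optimal cuts. -/
def SimRel (G : SimpleGraph V) (k : ℕ) (C D : Set V) : Prop :=
  C = D ∨ (Cᶜ ⊂ D ∧ ∀ E ∈ COpt G k, Cᶜ ⊂ E → E ⊆ D → E = D)

/-- The equivalence class `[C]` of an optimal cut `C` under `∼`. -/
def cls (G : SimpleGraph V) (k : ℕ) (C : Set V) : Set (Set V) :=
  {D ∈ COpt G k | SimRel G k C D}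

/-- The structure tree `T(C_opt)`: vertices are the classes `[C]`, `C ∈ C_opt`, and for each
`C ∈ C_opt` there is an edge joining `[C]` and `[C*]`. -/
def structureTree (G : SimpleGraph V) (k : ℕ) :
    SimpleGraph {S : Set (Set V) // ∃ C ∈ COpt G k, S = cls G k C} where
  Adj X Y := X ≠ Y ∧ ∃ C ∈ COpt G k,
    (X.1 = cls G k C ∧ Y.1 = cls G k Cᶜ) ∨ (Y.1 = cls G k C ∧ X.1 = cls G k Cᶜ)
  symm := ⟨by
    rintro X Y ⟨hne, C, hC, h⟩
    exact ⟨hne.symm, C, hC, h.symm⟩⟩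
  loopless := ⟨fun X h => h.1 rfl⟩

/-- A locally finite graph. -/
def LocallyFiniteGraph (G : SimpleGraph V) : Prop :=
  ∀ v : V, (G.neighborSet v).Finite

/-- The `r`-th neighbourhood `N^r S` of a set of vertices. -/
def nbhd (G : SimpleGraph V) (r : ℕ) (S : Set V) : Set V :=
  {v : V | ∃ u ∈ S, G.dist v u ≤ r}

/-- The block `B[C] = ⋂_{D ∼ C} N^κ D` assigned to the vertex `[C]` of the structure tree. -/
def block (G : SimpleGraph V) (k κ : ℕ) (C : Set V) : Set V :=
  ⋂ D ∈ cls G k C, nbhd G κ D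

/-- `Aut(Γ)\Γ` is finite: the automorphism group of `Γ` acts with finitely many
vertex orbits and finitely many edge orbits. -/
def AutFinOrbits (G : SimpleGraph V) : Prop :=
  (Set.range fun v : V => Set.range fun φ : G ≃g G => φ v).Finite ∧
  (Set.range fun e : G.edgeSet => Set.range fun φ : G ≃g G => Sym2.map ⇑φ e.1).Finite

/-- A group `H` (equipped with an action on the vertices) acts on the graph `G`
by graph automorphisms. -/
def ActsOn (G : SimpleGraph V) (H : Type u) [Group H] [MulAction H V] : Prop :=
  ∀ (g : H) (u v : V), G.Adj u v ↔ G.Adj (g • u) (g • v)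

/-- `G\Γ` is finite: finitely many vertex orbits and finitely many edge orbits. -/
def ActFinOrbits (G : SimpleGraph V) (H : Type u) [Group H] [MulAction H V] : Prop :=
  (Set.range fun v : V => Set.range fun g : H => g • v).Finite ∧
  (Set.range fun e : G.edgeSet => Set.range fun g : H => Sym2.map (fun v => g • v) e.1).Finite

/-- The graph has more than one end: some finite vertex set can be removed so that at least
two infinite connected components remain. -/
def MoreThanOneEnd (G : SimpleGraph V) : Prop :=
  ∃ S : Set V, S.Finite ∧ ∃ K₁ K₂ : (G.induce Sᶜ).ConnectedComponent,
    K₁ ≠ K₂ ∧ K₁.supp.Infinite ∧ K₂.supp.Infinite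

/-- The Cayley graph of a group w.r.t. a generating set `S` (edges labelled by `S ∪ S⁻¹`). -/
def cayleyGraph (K : Type u) [Group K] (S : Set K) : SimpleGraph K where
  Adj g h := g ≠ h ∧ (g⁻¹ * h ∈ S ∨ h⁻¹ * g ∈ S)
  symm := ⟨by rintro g h ⟨hne, hs⟩; exact ⟨hne.symm, hs.symm⟩⟩
  loopless := ⟨fun g h => h.1 rfl⟩

/-- A finitely generated group all of whose Cayley graphs have at most one end. -/
def FGOneEnded (K : Type u) [Group K] : Prop :=
  Group.FG K ∧ ∀ S : Set K, S.Finite → Subgroup.closure S = ⊤ →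
    ¬ MoreThanOneEnd (cayleyGraph K S)

/-- An accessible group: it acts on a tree with finitely many orbits, finite edge
stabilizers, and all vertex stabilizers finitely generated with at most one end. -/
def GroupAccessible (K : Type u) [Group K] : Prop :=
  ∃ (T : Type u) (tr : SimpleGraph T) (φ : K →* Equiv.Perm T),
    tr.IsTree ∧
    (∀ (g : K) (u v : T), tr.Adj u v ↔ tr.Adj (φ g u) (φ g v)) ∧
    (Set.range fun t : T => Set.range fun g : K => φ g t).Finite ∧
    (Set.range fun e : tr.edgeSet => Set.range fun g : K => Sym2.map ⇑(φ g) e.1).Finite ∧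
    (∀ e ∈ tr.edgeSet, {g : K | Sym2.map ⇑(φ g) e = e}.Finite) ∧
    (∀ t : T, ∃ L : Subgroup K, (L : Set K) = {g : K | φ g t = t} ∧ FGOneEnded ↥L)

/-- A tree decomposition of `G`. -/
def IsTreeDecomp (G : SimpleGraph V) {T : Type u} (tr : SimpleGraph T) (X : T → Set V) : Prop :=
  tr.IsTree ∧ (∀ v : V, ∃ t : T, v ∈ X t) ∧
  (∀ u v : V, G.Adj u v → ∃ t : T, u ∈ X t ∧ v ∈ X t) ∧
  (∀ v : V, (tr.induce {t : T | v ∈ X t}).Connected)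

/-- `G` has treewidth at most `w`. -/
def TreewidthAtMost (G : SimpleGraph V) (w : ℕ) : Prop :=
  ∃ (T : Type u) (tr : SimpleGraph T) (X : T → Set V),
    IsTreeDecomp G tr X ∧ ∀ t : T, (X t).Finite ∧ (X t).ncard ≤ w + 1

/-- `G` has finite treewidth. -/
def FiniteTreewidth (G : SimpleGraph V) : Prop := ∃ w : ℕ, TreewidthAtMost G w

/-- Uniformly bounded vertex degrees. -/
def UnifBoundedDegree (G : SimpleGraph V) : Prop :=
  ∃ d : ℕ, ∀ v : V, (G.neighborSet v).Finite ∧ (G.neighborSet v).ncard ≤ d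

/-- A class of groups (in universe `u`), as a property of groups. -/
def VirtuallyIn (𝒢 : (K : Type u) → [inst : Group K] → Prop) (K : Type u) [Group K] : Prop :=
  ∃ L : Subgroup K, L.FiniteIndex ∧ 𝒢 ↥L

/-- `K` has a quasi-isometric section: for some monoid presentation `π : Σ* → K` with
finite alphabet there is a section `σ` of `π` with `σ(1) = ε` which is quasi-isometric
w.r.t. the tree metric on `Σ*`; `d(u,v) ≤ k` is expressed via a common prefix
decomposition `u = p u'`, `v = p v'` with `|u'| + |v'| ≤ k`. -/
def HasQIS (K : Type u) [Group K] : Prop :=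
  ∃ (A : Type u) (_ : Finite A) (π : List A → K),
    (∀ u v : List A, π (u ++ v) = π u * π v) ∧ π [] = 1 ∧ Function.Surjective π ∧
    ∃ (σ : K → List A) (k : ℕ), 1 ≤ k ∧ σ 1 = [] ∧ (∀ g : K, π (σ g) = g) ∧
      ∀ (g : K) (a : A), ∃ p u' v' : List A,
        σ g = p ++ u' ∧ σ (g * π [a]) = p ++ v' ∧ u'.length + v'.length ≤ k

/-- A context-free group: the word problem w.r.t. some surjective monoid presentation
over a finite alphabet is a context-free language. -/
def IsContextFreeGroup (K : Type u) [Group K] : Prop :=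
  ∃ (A : Type u) (_ : Finite A) (π : List A → K),
    (∀ u v : List A, π (u ++ v) = π u * π v) ∧ π [] = 1 ∧ Function.Surjective π ∧
    Language.IsContextFree ({w : List A | π w = 1} : Language A)

end CFGroups

/-!
Take a tree decomposition `(T, X)` of width `w` and let `d` bound the degrees; we show that
`k = (w + 1) d` works. The ball `B` of radius `n` about `v₀` is finite, so the bags chosen for its
vertices lie in a finite subtree `H` of `T`, and a tail of `γ` avoids the finitely many vertices in
bags of `H`. Since bags containing a common vertex form a subtree, the bags of this tail all lie
in one component `K` of `T - H`, and as `T` is a tree, `K` is attached to `H` by a single edge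
`ab`. Every edge of `Γ` leaving the union `A` of the bags outside `K` then has an end in the bag
`X a`, so `|δA| ≤ (w + 1) d`. Finally `A` is trimmed to a cut `D` with `δD ⊆ δA` that still
contains `B` and misses the tail of `γ`.
-/

namespace SimpleGraph

variable {V : Type*} {G : SimpleGraph V} {S W : Set V} {x y z : V}

/-- The vertex set of the connected component of `G[S]` containing `x` (empty if `x ∉ S`). -/
def connectedComponentIn (G : SimpleGraph V) (S : Set V) (x : V) : Set V :=
  ⋃₀ {W | W ⊆ S ∧ x ∈ W ∧ (G.induce W).Connected}

lemma induce_singleton_connected (x : V) : (G.induce {x}).Connected :=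
  (connected_iff _).2 ⟨Preconnected.of_subsingleton, ⟨⟨x, rfl⟩⟩⟩

lemma connectedComponentIn_subset : G.connectedComponentIn S x ⊆ S :=
  Set.sUnion_subset fun _ hW => hW.1

lemma subset_connectedComponentIn (hW : (G.induce W).Connected) (hWS : W ⊆ S) (hx : x ∈ W) :
    W ⊆ G.connectedComponentIn S x :=
  Set.subset_sUnion_of_mem ⟨hWS, hx, hW⟩

lemma mem_connectedComponentIn (hx : x ∈ S) : x ∈ G.connectedComponentIn S x :=
  subset_connectedComponentIn (G := G) (induce_singleton_connected x)
    (Set.singleton_subset_iff.2 hx) rfl rfl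

lemma mem_of_mem_connectedComponentIn (hy : y ∈ G.connectedComponentIn S x) : x ∈ S := by
  obtain ⟨W, ⟨hWS, hxW, -⟩, -⟩ := hy
  exact hWS hxW

lemma connected_induce_connectedComponentIn (hx : x ∈ S) :
    (G.induce (G.connectedComponentIn S x)).Connected :=
  induce_sUnion_connected_of_pairwise_not_disjoint
    ⟨{x}, Set.singleton_subset_iff.2 hx, rfl, induce_singleton_connected x⟩
    (fun hW hW' => ⟨x, hW.2.1, hW'.2.1⟩) (fun hW => hW.2.2)

lemma subset_connectedComponentIn_of_mem (hW : (G.induce W).Connected) (hWS : W ⊆ S)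
    (hy : y ∈ W) (hyx : y ∈ G.connectedComponentIn S x) : W ⊆ G.connectedComponentIn S x := by
  have hx := mem_of_mem_connectedComponentIn hyx
  have hunion := induce_union_connected (connected_induce_connectedComponentIn hx).preconnected
    hW.preconnected ⟨y, hyx, hy⟩
  exact Set.subset_union_right.trans <| subset_connectedComponentIn hunion
    (Set.union_subset connectedComponentIn_subset hWS) (Or.inl (mem_connectedComponentIn hx))

lemma mem_connectedComponentIn_of_adj (hy : y ∈ G.connectedComponentIn S x) (hz : z ∈ S)
    (hyz : G.Adj y z) : z ∈ G.connectedComponentIn S x :=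
  subset_connectedComponentIn_of_mem (induce_pair_connected_of_adj hyz)
    (Set.insert_subset (connectedComponentIn_subset hy) (Set.singleton_subset_iff.2 hz))
    (Set.mem_insert y _) hy (Set.mem_insert_of_mem _ rfl)

lemma connectedComponentIn_eq (hy : y ∈ G.connectedComponentIn S x) :
    G.connectedComponentIn S x = G.connectedComponentIn S y := by
  have hyS : y ∈ S := connectedComponentIn_subset hy
  exact subset_antisymm
    (subset_connectedComponentIn (connected_induce_connectedComponentIn
      (mem_of_mem_connectedComponentIn hy)) connectedComponentIn_subset hy)
    (subset_connectedComponentIn_of_mem (connected_induce_connectedComponentIn hyS)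
      connectedComponentIn_subset (mem_connectedComponentIn hyS) hy)

lemma apply_mem_connectedComponentIn {f : ℕ → V} (hf : ∀ i, G.Adj (f i) (f (i + 1))) {i₀ : ℕ}
    (hS : ∀ i ≥ i₀, f i ∈ S) : ∀ i ≥ i₀, f i ∈ G.connectedComponentIn S (f i₀) := by
  intro i hi
  induction i, hi using Nat.le_induction with
  | base => exact mem_connectedComponentIn (hS i₀ le_rfl)
  | succ i hi ih => exact mem_connectedComponentIn_of_adj ih (hS (i + 1) (by omega)) (hf i)

lemma subset_connectedComponentIn_of_chain {U : ℕ → Set V} (hU : ∀ i, (G.induce (U i)).Connected)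
    (hmeet : ∀ i, (U i ∩ U (i + 1)).Nonempty) {i₀ : ℕ} (hS : ∀ i ≥ i₀, U i ⊆ S) (hx : x ∈ U i₀) :
    ∀ i ≥ i₀, U i ⊆ G.connectedComponentIn S x := by
  intro i hi
  induction i, hi using Nat.le_induction with
  | base => exact subset_connectedComponentIn (hU i₀) (hS i₀ le_rfl) hx
  | succ i hi ih =>
    obtain ⟨y, hy, hy'⟩ := hmeet i
    exact subset_connectedComponentIn_of_mem (hU _) (hS _ (by omega)) hy' (ih hy)

/-- The complement of a component of `G - S` consists of `S` and the other components, each of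
which is attached to `S`. -/
theorem Preconnected.connected_induce_compl_connectedComponentIn (hG : G.Preconnected)
    (hS : (G.induce S).Connected) (x : V) :
    (G.induce (G.connectedComponentIn Sᶜ x)ᶜ).Connected := by
  set D := G.connectedComponentIn Sᶜ x
  have hSD : S ⊆ Dᶜ := fun s hs hsD => connectedComponentIn_subset hsD hs
  obtain ⟨u, hu⟩ := hS.nonempty
  refine induce_connected_of_patches u (hSD hu) fun {v} hv => ?_
  by_cases hvS : v ∈ S
  · exact ⟨S, hSD, hu, hvS, hS.preconnected _ _⟩
  set D' := G.connectedComponentIn Sᶜ v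
  have hvD' : v ∈ D' := mem_connectedComponentIn hvS
  have hD'D : D' ⊆ Dᶜ := fun z hzD' hzD => by
    have hDD' : D = D' := (connectedComponentIn_eq hzD).trans (connectedComponentIn_eq hzD').symm
    exact hv (hDD' ▸ hvD')
  obtain ⟨e, -, heD', heD'c⟩ := (hG v u).some.exists_boundary_dart D' hvD'
    fun h => connectedComponentIn_subset h hu
  have heS : e.snd ∈ S := by
    by_contra h
    exact heD'c (mem_connectedComponentIn_of_adj heD' h e.adj)
  exact ⟨D' ∪ S, Set.union_subset hD'D hSD, Or.inr hu, Or.inl hvD',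
    (connected_induce_union (connected_induce_connectedComponentIn hvS).preconnected
      hS.preconnected heD' heS e.adj).preconnected _ _⟩

lemma reachable_deleteEdges_of_induce_connected (hW : (G.induce W).Connected) (hx : x ∈ W)
    (hy : y ∈ W) {u : V} (hu : u ∉ W) (v : V) : (G.deleteEdges {s(u, v)}).Reachable x y := by
  let f : G.induce W →g G.deleteEdges {s(u, v)} :=
    { toFun := Subtype.val
      map_rel' := fun {a b} hab => by
        refine deleteEdges_adj.2 ⟨hab, fun h => ?_⟩
        rcases Sym2.eq_iff.1 h with ⟨rfl, -⟩ | ⟨-, rfl⟩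
        exacts [hu a.2, hu b.2] }
  exact (hW.preconnected ⟨x, hx⟩ ⟨y, hy⟩).map f

/-- Two edges from `K` to `H` with distinct ends in `K` would close a cycle through `K` and `H`,
so the edge `st` would not be a bridge. -/
theorem IsAcyclic.eq_of_adj_of_disjoint (hG : G.IsAcyclic) {K H : Set V}
    (hK : (G.induce K).Connected) (hH : (G.induce H).Connected) (hKH : Disjoint K H)
    {s s' t t' : V} (hs : s ∈ K) (hs' : s' ∈ K) (ht : t ∈ H) (ht' : t' ∈ H)
    (hst : G.Adj s t) (hst' : G.Adj s' t') : s = s' := by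
  by_contra hne
  have hss' : (G.deleteEdges {s(s, t)}).Reachable s s' := by
    rw [Sym2.eq_swap]
    exact reachable_deleteEdges_of_induce_connected hK hs hs' (hKH.notMem_of_mem_right ht) s
  have hs't' : (G.deleteEdges {s(s, t)}).Adj s' t' := by
    refine deleteEdges_adj.2 ⟨hst', fun h => ?_⟩
    rcases Sym2.eq_iff.1 h with ⟨h, -⟩ | ⟨h, -⟩
    exacts [hne h.symm, hKH.notMem_of_mem_right ht (h ▸ hs')]
  have ht't : (G.deleteEdges {s(s, t)}).Reachable t' t :=
    reachable_deleteEdges_of_induce_connected hH ht' ht (hKH.notMem_of_mem_left hs) t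
  exact isBridge_iff.1 (isAcyclic_iff_forall_adj_isBridge.1 hG hst)
    (hss'.trans (hs't'.reachable.trans ht't))

theorem Connected.finite_setOf_dist_le (hG : G.Connected)
    (hlf : ∀ v, (G.neighborSet v).Finite) (v₀ : V) (n : ℕ) :
    {u | G.dist v₀ u ≤ n}.Finite := by
  induction n with
  | zero =>
    exact (Set.finite_singleton v₀).subset fun u hu =>
      (hG.dist_eq_zero_iff.1 (Nat.le_zero.1 hu)).symm
  | succ n ih =>
    refine (ih.union (ih.biUnion fun v _ => hlf v)).subset fun u hu => ?_
    obtain ⟨p, hp⟩ := hG.exists_walk_length_eq_dist u v₀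
    cases p with
    | nil => exact Or.inl (by simp)
    | @cons _ v _ h q =>
      refine Or.inr (Set.mem_biUnion (x := v) ?_ h.symm)
      have hq := dist_le q
      rw [Walk.length_cons] at hp
      change G.dist v₀ u ≤ n + 1 at hu
      change G.dist v₀ v ≤ n
      rw [dist_comm] at hu ⊢
      omega

theorem Connected.connected_induce_setOf_dist_le (hG : G.Connected) (v₀ : V) (n : ℕ) :
    (G.induce {u | G.dist v₀ u ≤ n}).Connected := by
  classical
  refine induce_connected_of_patches v₀ (by simp) fun {v} hv => ?_
  obtain ⟨p, hp⟩ := hG.exists_walk_length_eq_dist v₀ v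
  refine ⟨{z | z ∈ p.support}, fun z hz => ?_, p.start_mem_support, p.end_mem_support,
    p.connected_induce_support.preconnected _ _⟩
  have h₁ := dist_le (p.takeUntil z hz)
  have h₂ := p.length_takeUntil_le_length hz
  change G.dist v₀ z ≤ n
  change G.dist v₀ v ≤ n at hv
  omega

end SimpleGraph

namespace CFGroups

open SimpleGraph Filter

variable {V : Type u} {G : SimpleGraph V}

theorem edgeBoundary_finite_and_weight_le {d : ℕ}
    (hdeg : ∀ v, (G.neighborSet v).Finite ∧ (G.neighborSet v).ncard ≤ d) {A : Set V}
    {S : Finset V} (hS : ∀ p ∈ edgeBoundary G A, p.1 ∈ S) :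
    (edgeBoundary G A).Finite ∧ weight G A ≤ S.card * d := by
  have hsub : edgeBoundary G A ⊆ ⋃ x ∈ S, {x} ×ˢ G.neighborSet x :=
    fun p hp => Set.mem_biUnion (hS p hp) ⟨rfl, hp.1⟩
  have hfin : (⋃ x ∈ S, {x} ×ˢ G.neighborSet x).Finite :=
    S.finite_toSet.biUnion fun x _ => (Set.finite_singleton x).prod (hdeg x).1
  refine ⟨hfin.subset hsub, (Set.ncard_le_ncard hsub hfin).trans ?_⟩
  calc _ ≤ ∑ x ∈ S, ({x} ×ˢ G.neighborSet x).ncard := S.set_ncard_biUnion_le _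
    _ ≤ ∑ _x ∈ S, d := Finset.sum_le_sum fun x _ => by
        rw [Set.ncard_prod, Set.ncard_singleton, one_mul]
        exact (hdeg x).2
    _ = S.card * d := by rw [Finset.sum_const, smul_eq_mul]

lemma subset_of_edgeBoundary_subset {A E W : Set V} {x : V} (hW : (G.induce W).Connected)
    (hWA : W ⊆ A) (hEA : edgeBoundary G E ⊆ edgeBoundary G A) (hx : x ∈ W) (hxE : x ∈ E) :
    W ⊆ E := by
  intro y hy
  by_contra hyE
  obtain ⟨q⟩ := hW.preconnected ⟨x, hx⟩ ⟨y, hy⟩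
  obtain ⟨e, -, he, he'⟩ := q.exists_boundary_dart (Subtype.val ⁻¹' E) hxE hyE
  have hδ : (e.fst.1, e.snd.1) ∈ edgeBoundary G E := ⟨e.adj, he, he'⟩
  exact (hEA hδ).2.2 (hWA e.snd.2)

/-- `D` is the component of `x` in the complement of the component `C` of `y` in `Aᶜ`. -/
theorem exists_isCut_of_edgeBoundary_finite (hG : G.Preconnected) {A : Set V}
    (hA : (edgeBoundary G A).Finite) {x y : V} (hx : x ∈ A) (hy : y ∉ A) :
    ∃ D : Set V, IsCut G D ∧ x ∈ D ∧ edgeBoundary G D ⊆ edgeBoundary G A ∧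
      G.connectedComponentIn Aᶜ y ⊆ Dᶜ := by
  set C := G.connectedComponentIn Aᶜ y
  have hxC : x ∈ Cᶜ := fun h => connectedComponentIn_subset h hx
  have hDC : G.connectedComponentIn Cᶜ x ⊆ Cᶜ := connectedComponentIn_subset
  have hδ : edgeBoundary G (G.connectedComponentIn Cᶜ x) ⊆ edgeBoundary G A := by
    rintro ⟨u, v⟩ ⟨huv, hu, hv⟩
    have hvC : v ∈ C := by
      by_contra h
      exact hv (mem_connectedComponentIn_of_adj hu h huv)
    have huA : u ∈ A := by
      by_contra h
      exact hDC hu (mem_connectedComponentIn_of_adj hvC h huv.symm)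
    exact ⟨huv, huA, connectedComponentIn_subset hvC⟩
  refine ⟨G.connectedComponentIn Cᶜ x, ⟨⟨x, mem_connectedComponentIn hxC⟩,
    ⟨y, fun h => hDC h (mem_connectedComponentIn hy)⟩, connected_induce_connectedComponentIn hxC,
    hG.connected_induce_compl_connectedComponentIn (connected_induce_connectedComponentIn hy) x,
    hA.subset hδ⟩, mem_connectedComponentIn hxC, hδ, fun z hz hzD => hDC hzD hz⟩

/-- An edge `uv` leaving `A` lies in a bag of `K`, while `u` also lies in a bag outside `K`; the
bags containing `u` form a connected subtree, which therefore crosses the exit edge at `a`. -/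
theorem fst_mem_of_mem_edgeBoundary {T : Type*} {tr : SimpleGraph T} {X : T → Set V}
    (hedge : ∀ u v, G.Adj u v → ∃ t, u ∈ X t ∧ v ∈ X t)
    (hsub : ∀ v, (tr.induce {t | v ∈ X t}).Connected) {K : Set T} {a : T}
    (hK : ∀ s t, tr.Adj s t → s ∈ K → t ∉ K → s = a) {p : V × V}
    (hp : p ∈ edgeBoundary G (⋃ t ∈ Kᶜ, X t)) : p.1 ∈ X a := by
  obtain ⟨huv, hu, hv⟩ := hp
  obtain ⟨r, hur, hvr⟩ := hedge _ _ huv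
  have hrK : r ∈ K := by
    by_contra h
    exact hv (Set.mem_biUnion h hvr)
  obtain ⟨r', hr'K, hur'⟩ := Set.mem_iUnion₂.1 hu
  obtain ⟨q⟩ := (hsub p.1).preconnected ⟨r, hur⟩ ⟨r', hur'⟩
  obtain ⟨e, -, heK, heK'⟩ := q.exists_boundary_dart (Subtype.val ⁻¹' K) hrK hr'K
  exact hK _ _ e.adj heK heK' ▸ e.fst.2

theorem IsTreeDecomp.exists_separation {T : Type u} {tr : SimpleGraph T} {X : T → Set V}
    (hX : IsTreeDecomp G tr X) (hfin : ∀ t, (X t).Finite) {B : Set V} (hB : B.Finite)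
    (hBne : B.Nonempty) {γ : ℕ → V} (hγ : IsRayPath G γ) :
    ∃ (K : Set T) (a : T), B ⊆ ⋃ t ∈ Kᶜ, X t ∧ (∀ᶠ i in atTop, γ i ∉ ⋃ t ∈ Kᶜ, X t) ∧
      ∀ s t, tr.Adj s t → s ∈ K → t ∉ K → s = a := by
  classical
  obtain ⟨htree, hcover, hedge, hsub⟩ := hX
  have hpc := htree.connected.preconnected
  choose τ hτ using hcover
  obtain ⟨H, hBH, hH⟩ := extend_finset_to_connected hpc (t := (hB.image τ).toFinset)
    (by simpa using hBne)
  have hτH : ∀ b ∈ B, τ b ∈ (H : Set T) := fun b hb => hBH (by simpa using ⟨b, hb, rfl⟩)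
  have hY : (⋃ t ∈ (H : Set T), X t).Finite := H.finite_toSet.biUnion fun t _ => hfin t
  obtain ⟨i₀, hi₀⟩ := eventually_atTop.1 <| Nat.cofinite_eq_atTop ▸
    hγ.1.tendsto_cofinite.eventually hY.compl_mem_cofinite
  have hbagH : ∀ i ≥ i₀, {t | γ i ∈ X t} ⊆ (H : Set T)ᶜ :=
    fun i hi t ht htH => hi₀ i hi (Set.mem_biUnion htH ht)
  set K := tr.connectedComponentIn (H : Set T)ᶜ (τ (γ i₀))
  have hKH : Disjoint K H := Set.subset_compl_iff_disjoint_right.1 connectedComponentIn_subset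
  have htail : ∀ i ≥ i₀, {t | γ i ∈ X t} ⊆ K :=
    subset_connectedComponentIn_of_chain (fun i => hsub (γ i)) (fun i => hedge _ _ (hγ.2 i))
      hbagH (hτ _)
  have hK := connected_induce_connectedComponentIn (G := tr) (hbagH i₀ le_rfl (hτ (γ i₀)))
  have hexit : ∀ s t, tr.Adj s t → s ∈ K → t ∉ K → t ∈ H := fun s t hst hs ht => by
    by_contra h
    exact ht (mem_connectedComponentIn_of_adj hs h hst)
  obtain ⟨v, hv⟩ := hBne
  obtain ⟨e, -, heK, heK'⟩ := (hpc (τ (γ i₀)) (τ v)).some.exists_boundary_dart K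
    (htail i₀ le_rfl (hτ _)) (hKH.notMem_of_mem_right (hτH v hv))
  refine ⟨K, e.fst, fun b hb => Set.mem_biUnion (hKH.notMem_of_mem_right (hτH b hb)) (hτ b),
    eventually_atTop.2 ⟨i₀, fun i hi h => ?_⟩, fun s t hst hs ht => ?_⟩
  · obtain ⟨t, ht, hmem⟩ := Set.mem_iUnion₂.1 h
    exact ht (htail i hi hmem)
  · exact htree.isAcyclic.eq_of_adj_of_disjoint hK hH hKH hs heK (hexit _ _ hst hs ht)
      (hexit _ _ e.adj heK heK') hst e.adj

end CFGroups

open CFGroups Pointwise in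
/-- In a connected graph of finite treewidth and uniformly bounded degree
there is `k ∈ ℕ` such that for every one-sided infinite simple path `γ`, every vertex `v₀`
and every `n` there is a `k`-cut `D` with `v₀ ∈ D`, `d(v₀, D*) ≥ n` and `|D* ∩ γ| = ∞`. -/
theorem separation_of_rays
    {V : Type u} (G : SimpleGraph V) (hconn : G.Connected)
    (htw : CFGroups.FiniteTreewidth G) (hdeg : CFGroups.UnifBoundedDegree G) :
    ∃ k : ℕ, ∀ γ : ℕ → V, CFGroups.IsRayPath G γ → ∀ v₀ : V, ∀ n : ℕ,
      ∃ D : Set V, CFGroups.IsCutLe G k D ∧ v₀ ∈ D ∧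
        (∀ u ∈ Dᶜ, n ≤ G.dist v₀ u) ∧ (Set.range γ ∩ Dᶜ).Infinite := by
  obtain ⟨w, T, tr, X, hX, hbags⟩ := htw
  obtain ⟨-, -, hedge, hsub⟩ := id hX
  obtain ⟨d, hdeg⟩ := hdeg
  refine ⟨(w + 1) * d, fun γ hγ v₀ n => ?_⟩
  have hv₀B : v₀ ∈ {u | G.dist v₀ u ≤ n} := by simp
  obtain ⟨K, a, hBA, htail, hexit⟩ := hX.exists_separation (fun t => (hbags t).1)
    (hconn.finite_setOf_dist_le (fun v => (hdeg v).1) v₀ n) ⟨v₀, hv₀B⟩ hγ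
  obtain ⟨i₀, hi₀⟩ := Filter.eventually_atTop.1 htail
  obtain ⟨hδA, hweight⟩ := edgeBoundary_finite_and_weight_le hdeg (S := (hbags a).1.toFinset)
    fun p hp => (hbags a).1.mem_toFinset.2 (fst_mem_of_mem_edgeBoundary hedge hsub hexit hp)
  obtain ⟨D, hD, hv₀D, hδD, hCD⟩ :=
    exists_isCut_of_edgeBoundary_finite hconn.preconnected hδA (hBA hv₀B) (hi₀ i₀ le_rfl)
  have hγD : ∀ i ≥ i₀, γ i ∉ D := fun i hi =>
    hCD (SimpleGraph.apply_mem_connectedComponentIn hγ.2 hi₀ i hi)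
  refine ⟨D, ⟨hD, ?_⟩, hv₀D, fun u hu => ?_, ?_⟩
  · calc weight G D ≤ weight G (⋃ t ∈ Kᶜ, X t) := Set.ncard_le_ncard hδD hδA
      _ ≤ _ := hweight
      _ ≤ (w + 1) * d := by
        rw [← Set.ncard_eq_toFinset_card _ (hbags a).1]
        exact Nat.mul_le_mul_right d (hbags a).2
  · by_contra hlt
    exact hu (subset_of_edgeBoundary_subset (hconn.connected_induce_setOf_dist_le v₀ n) hBA hδD
      hv₀B hv₀D (show G.dist v₀ u ≤ n by omega))
  · exact Set.infinite_of_injective_forall_mem (f := fun m => γ (i₀ + m))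
      (hγ.1.comp (add_right_injective i₀)) fun m => ⟨⟨_, rfl⟩, hγD _ (by omega)⟩
end

section
/- Let Γ be a connected graph of finite treewidth and uniformly bounded vertex degree. Then Γ is accessible, i.e., there exists k ∈ ℕ such that for every bi-infinite simple path α in Γ, either C(α) = ∅ or C(α) contains a k-cut. -/
open Pointwise

universe u

/-!
Fix a tree decomposition `(T, X)` with bags of size at most `w + 1` and a degree bound `d`.
If some bag `X t` separates the two tails of `α`, let `A` be the component of `Γ - X t` containing
one tail and `Q` the component of `Γ - A` containing the other; then `Qᶜ` is a cut in `C(α)`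
all of whose edges end in `X t`, so it has weight at most `(w + 1) d`.
If no bag separates the tails, the bags met by the component of `Γ - X t` containing them lie in a
single component of `T - t`. These components meet pairwise, so they point along a ray of `T`, and
along that ray the components of `Γ - X t` eventually avoid every finite set, such as the vertex
boundary of a cut in `C(α)`; but a cut in `C(α)` separates the tails.
-/

open Filter

namespace CFGroups

section ReachIn

variable {V : Type*} {G : SimpleGraph V} {W W' : Set V} {a b c x y z : V}

/-- Reachability by a walk all of whose edges lie in `G[W]`; it holds for `x = y` even when
`x ∉ W`. -/
def ReachIn (G : SimpleGraph V) (W : Set V) : V → V → Prop :=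
  Relation.ReflTransGen fun x y => G.Adj x y ∧ x ∈ W ∧ y ∈ W

/-- The vertex set of the component of `G[W]` containing `a`, or `{a}` when `a ∉ W`. -/
def compIn (G : SimpleGraph V) (W : Set V) (a : V) : Set V := {y | ReachIn G W a y}

theorem ReachIn.trans (h : ReachIn G W x y) (h' : ReachIn G W y z) : ReachIn G W x z :=
  Relation.ReflTransGen.trans h h'

theorem ReachIn.symm (h : ReachIn G W x y) : ReachIn G W y x := by
  induction h with
  | refl => exact .refl
  | tail _ h ih => exact .head ⟨h.1.symm, h.2.2, h.2.1⟩ ih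

theorem ReachIn.mono (h : ReachIn G W x y) (hW : W ⊆ W') : ReachIn G W' x y := by
  induction h with
  | refl => exact .refl
  | tail _ h ih => exact .tail ih ⟨h.1, hW h.2.1, hW h.2.2⟩

theorem ReachIn.mem (h : ReachIn G W x y) (hx : x ∈ W) : y ∈ W := by
  induction h with
  | refl => exact hx
  | tail _ h _ => exact h.2.2

theorem reachIn_of_walk (p : G.Walk x y) (hp : ∀ z ∈ p.support, z ∈ W) :
    ReachIn G W x y := by
  induction p with
  | nil => exact .refl
  | cons h p ih =>
    exact .head ⟨h, hp _ p.support.mem_cons_self, hp _ (by simp)⟩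
      (ih fun z hz => hp z (List.mem_cons_of_mem _ hz))

theorem ReachIn.reachable_induce (h : ReachIn G W x y) (hx : x ∈ W) (hy : y ∈ W) :
    (G.induce W).Reachable ⟨x, hx⟩ ⟨y, hy⟩ := by
  induction h with
  | refl => rfl
  | tail _ h ih => exact (ih h.2.1).trans (SimpleGraph.Adj.reachable (by exact h.1))

theorem reachIn_of_reachable_induce {x y : W} (h : (G.induce W).Reachable x y) :
    ReachIn G W x y := by
  obtain ⟨p⟩ := h
  induction p with
  | nil => exact .refl
  | cons h _ ih => exact .head ⟨h, Subtype.prop _, Subtype.prop _⟩ ih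

theorem induce_connected_iff :
    (G.induce W).Connected ↔ W.Nonempty ∧ ∀ x ∈ W, ∀ y ∈ W, ReachIn G W x y := by
  rw [SimpleGraph.connected_iff, Set.nonempty_coe_sort, and_comm]
  refine and_congr_right fun _ => ⟨fun h x hx y hy => ?_, fun h x y => ?_⟩
  · exact reachIn_of_reachable_induce (h ⟨x, hx⟩ ⟨y, hy⟩)
  · exact (h x x.2 y y.2).reachable_induce x.2 y.2

theorem mem_compIn_self : a ∈ compIn G W a := Relation.ReflTransGen.refl

theorem compIn_subset (ha : a ∈ W) : compIn G W a ⊆ W := fun _ h => ReachIn.mem h ha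

theorem mem_compIn_of_adj (ha : a ∈ W) (hx : x ∈ compIn G W a) (hxy : G.Adj x y)
    (hy : y ∈ W) : y ∈ compIn G W a :=
  Relation.ReflTransGen.tail hx ⟨hxy, compIn_subset ha hx, hy⟩

theorem reachIn_compIn (hy : y ∈ compIn G W a) : ReachIn G (compIn G W a) a y := by
  induction hy with
  | refl => exact .refl
  | tail hc h ih => exact .tail ih ⟨h.1, hc, Relation.ReflTransGen.tail hc h⟩

theorem induce_compIn_connected : (G.induce (compIn G W a)).Connected :=
  induce_connected_iff.2 ⟨⟨a, mem_compIn_self⟩, fun _ hx _ hy =>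
    (reachIn_compIn hx).symm.trans (reachIn_compIn hy)⟩

theorem compIn_subset_compIn {a' : V} (hc : c ∈ compIn G W a) (hc' : c ∈ compIn G W' a')
    (hW : compIn G W' a' ⊆ W) : compIn G W' a' ⊆ compIn G W a := fun _ hx =>
  ReachIn.trans hc (((reachIn_compIn hc').symm.trans (reachIn_compIn hx)).mono hW)

theorem exists_adj_mem_compIn_compl (hG : G.Connected) (hb : b ≠ c) :
    ∃ s, G.Adj c s ∧ s ∈ compIn G {c}ᶜ b := by
  obtain ⟨p⟩ := hG.preconnected b c
  induction p with
  | nil => exact absurd rfl hb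
  | @cons b d t hbd p ih =>
    by_cases hdc : d = t
    · subst hdc; exact ⟨b, hbd.symm, mem_compIn_self⟩
    · obtain ⟨s, hs, hds⟩ := ih hdc
      exact ⟨s, hs, .head ⟨hbd, hb, hdc⟩ hds⟩

theorem ReachIn.reachable_deleteEdges {e : Sym2 V} (h : ReachIn G W x y) (hz : z ∉ W)
    (he : z ∈ e) : (G.deleteEdges {e}).Reachable x y := by
  induction h with
  | refl => rfl
  | @tail c d _ h ih =>
    refine ih.trans (SimpleGraph.Adj.reachable ((G.deleteEdges_adj ..).2 ⟨h.1, ?_⟩))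
    rintro rfl
    rcases Sym2.mem_iff.1 he with rfl | rfl
    exacts [hz h.2.1, hz h.2.2]

-- Both walks avoid the edge `xy`, which is a bridge.
theorem not_reachIn_compl_and_reachIn_compl (hG : G.IsAcyclic) (hadj : G.Adj x y) :
    ¬ (ReachIn G {x}ᶜ c y ∧ ReachIn G {y}ᶜ c x) := fun ⟨h, h'⟩ =>
  SimpleGraph.isAcyclic_iff_forall_adj_isBridge.1 hG hadj
    ((h'.reachable_deleteEdges (by simp) (Sym2.mem_mk_right x y)).symm.trans
      (h.reachable_deleteEdges (by simp) (Sym2.mem_mk_left x y)))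

end ReachIn

section Tree

variable {T : Type*} {tr : SimpleGraph T} {b : T → T}

theorem exists_mem_compIn_and_compIn_subset (htree : tr.IsTree) (hb : ∀ t, b t ≠ t)
    (hmeet : ∀ t t', (compIn tr {t}ᶜ (b t) ∩ compIn tr {t'}ᶜ (b t')).Nonempty) (t : T) :
    ∃ t', t' ∈ compIn tr {t}ᶜ (b t) ∧ compIn tr {t'}ᶜ (b t') ⊆ compIn tr {t}ᶜ (b t) := by
  obtain ⟨t', hadj, ht'⟩ := exists_adj_mem_compIn_compl htree.connected (hb t)
  obtain ⟨c, hc, hc'⟩ := hmeet t t'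
  have hback : t ∉ compIn tr {t'}ᶜ (b t') := fun ht =>
    not_reachIn_compl_and_reachIn_compl htree.isAcyclic hadj
      ⟨(ReachIn.symm hc).trans ht', (ReachIn.symm hc').trans ht⟩
  exact ⟨t', ht', compIn_subset_compIn hc hc' fun x hx hxt => hback (hxt ▸ hx)⟩

/-- `τ (n + 1)` is a neighbour of `τ n` in the component chosen at `τ n`, and the chosen
components decrease along `τ`. -/
theorem exists_seq_finite_setOf_mem_compIn (htree : tr.IsTree) (hb : ∀ t, b t ≠ t)
    (hmeet : ∀ t t', (compIn tr {t}ᶜ (b t) ∩ compIn tr {t'}ᶜ (b t')).Nonempty) :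
    ∃ τ : ℕ → T, ∀ s, {n | s ∈ compIn tr {τ n}ᶜ (b (τ n))}.Finite := by
  set β : T → Set T := fun t => compIn tr {t}ᶜ (b t)
  have hself : ∀ t, t ∉ β t := fun t ht => compIn_subset (hb t) ht rfl
  choose nxt hnxt hsub using exists_mem_compIn_and_compIn_subset htree hb hmeet
  obtain ⟨t₀⟩ := htree.connected.nonempty
  set τ : ℕ → T := fun n => nxt^[n] t₀
  have hτ (n : ℕ) : τ (n + 1) = nxt (τ n) := Function.iterate_succ_apply' nxt n t₀
  have hanti : Antitone (β ∘ τ) :=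
    antitone_nat_of_succ_le fun n => by simpa only [Function.comp_apply, hτ] using hsub _
  have hfwd (m n : ℕ) (hmn : m < n) : τ n ∈ β (τ m) := by
    obtain ⟨k, rfl⟩ := Nat.exists_eq_add_of_lt hmn
    exact hanti (Nat.le_add_right m k) (by simpa only [Function.comp_apply, hτ] using hnxt _)
  have hinj : Function.Injective τ :=
    .of_lt_imp_ne fun m n hmn h => hself _ (h ▸ hfwd m n hmn)
  refine ⟨τ, fun s => ?_⟩
  obtain ⟨ω⟩ := htree.connected.preconnected s (τ 0)
  -- for `n ≥ 1`, `τ 0 ∉ β (τ n)`, so the path from `s ∈ β (τ n)` to `τ 0` passes through `τ n`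
  refine ((ω.support.finite_toSet.preimage hinj.injOn).insert 0).subset fun n hn => ?_
  obtain _ | n := n
  · exact Set.mem_insert 0 _
  refine Set.mem_insert_of_mem _ (by_contra fun hns => ?_)
  have h0 : τ 0 ∈ β (τ (n + 1)) :=
    ReachIn.trans hn (reachIn_of_walk ω fun z hz hzτ =>
      hns (show τ (n + 1) ∈ ω.support from Set.mem_singleton_iff.1 hzτ ▸ hz))
  have h1 : τ 0 ∈ β (τ (0 + 1)) := hanti (Nat.le_add_left (0 + 1) n) h0
  rw [hτ] at h1
  exact hself _ (hsub _ h1)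

end Tree

section Tails

variable {V : Type*} {G : SimpleGraph V} {α : ℤ → V} {S W C : Set V}

/-- `S` does not separate the two tails of `α`. -/
def TailsJoined (G : SimpleGraph V) (α : ℤ → V) (S : Set V) : Prop :=
  ∃ a ∉ S, ∀ᶠ i in cofinite, α i ∈ compIn G Sᶜ a

theorem exists_eventually_atTop_mem_compIn (hα : ∀ i, G.Adj (α i) (α (i + 1)))
    (h : ∀ᶠ i in atTop, α i ∈ W) : ∃ a ∈ W, ∀ᶠ i in atTop, α i ∈ compIn G W a := by
  obtain ⟨M, hM⟩ := eventually_atTop.1 h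
  refine ⟨α M, hM M le_rfl, eventually_atTop.2 ⟨M, Int.leInduction mem_compIn_self ?_⟩⟩
  exact fun i hi ih => mem_compIn_of_adj (hM M le_rfl) ih (hα i) (hM (i + 1) (by omega))

theorem exists_eventually_atBot_mem_compIn (hα : ∀ i, G.Adj (α i) (α (i + 1)))
    (h : ∀ᶠ i in atBot, α i ∈ W) : ∃ a ∈ W, ∀ᶠ i in atBot, α i ∈ compIn G W a := by
  have hα' (i : ℤ) : G.Adj (α (-i)) (α (-(i + 1))) := by
    simpa [neg_add_eq_sub] using (hα (-i - 1)).symm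
  obtain ⟨a, ha, h'⟩ :=
    exists_eventually_atTop_mem_compIn hα' (tendsto_neg_atTop_atBot.eventually h)
  exact ⟨a, ha, by simpa using tendsto_neg_atBot_atTop.eventually h'⟩

theorem infinite_range_inter (hα : Function.Injective α) (h : ∃ᶠ i in cofinite, α i ∈ C) :
    (Set.range α ∩ C).Infinite :=
  ((frequently_cofinite_iff_infinite.1 h).image hα.injOn).mono
    (Set.image_subset_iff.2 fun i hi => ⟨⟨i, rfl⟩, hi⟩)

theorem finite_range_inter_compl (h : ∀ᶠ i in cofinite, α i ∈ C) :
    (Set.range α ∩ Cᶜ).Finite :=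
  ((eventually_cofinite.1 h).image α).subset <| by
    rintro _ ⟨⟨i, rfl⟩, hC⟩
    exact ⟨i, hC, rfl⟩

theorem vertexBoundary_finite (h : (edgeBoundary G C).Finite) : (vertexBoundary G C).Finite :=
  ((h.image Prod.fst).union (h.image Prod.snd)).subset fun u ⟨v, huv, hC⟩ =>
    hC.elim (fun hC => .inl ⟨(u, v), ⟨huv, hC⟩, rfl⟩)
      (fun hC => .inr ⟨(v, u), ⟨huv.symm, hC⟩, rfl⟩)

theorem ReachIn.mem_iff_mem {x y : V} (h : ReachIn G (vertexBoundary G C)ᶜ x y) :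
    x ∈ C ↔ y ∈ C := by
  induction h with
  | refl => rfl
  | @tail c d _ h ih =>
    exact ih.trans ⟨fun hc => by_contra fun hd => h.2.1 ⟨d, h.1, .inl ⟨hc, hd⟩⟩,
      fun hd => by_contra fun hc => h.2.1 ⟨d, h.1, .inr ⟨hd, hc⟩⟩⟩

theorem not_tailsJoined_vertexBoundary (hC : C ∈ cutsSplitting G α) :
    ¬ TailsJoined G α (vertexBoundary G C) := by
  rintro ⟨a, -, ha⟩
  have hside : ∀ᶠ i in cofinite, (α i ∈ C ↔ a ∈ C) :=
    ha.mono fun i hi => (ReachIn.mem_iff_mem hi).symm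
  by_cases haC : a ∈ C
  · exact hC.2.2 (finite_range_inter_compl (hside.mono fun i hi => hi.2 haC))
  · refine hC.2.1 ?_
    simpa using finite_range_inter_compl (C := Cᶜ) (hside.mono fun i hi h => haC (hi.1 h))

end Tails

section Cuts

variable {V : Type*} {G : SimpleGraph V} {A S : Set V} {a b : V} {d : ℕ}

theorem isCut_compl_compIn (hG : G.Connected) (hA : (G.induce A).Connected) (hb : b ∉ A)
    (hfin : (edgeBoundary G (compIn G Aᶜ b)ᶜ).Finite) : IsCut G (compIn G Aᶜ b)ᶜ := by
  set Q := compIn G Aᶜ b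
  obtain ⟨⟨a₀, ha₀⟩, hAreach⟩ := induce_connected_iff.1 hA
  have hAQ : A ⊆ Qᶜ := fun x hxA hxQ => compIn_subset hb hxQ hxA
  -- walking from `x ∉ Q` towards `A`, the walk cannot enter `Q` before it meets `A`
  have hreach : ∀ x y (p : G.Walk x y), y ∈ A → x ∉ Q → ∃ a ∈ A, ReachIn G Qᶜ x a := by
    intro x y p
    induction p with
    | nil => exact fun hy _ => ⟨_, hy, .refl⟩
    | @cons x c _ hxc _ ih =>
      intro hy hxQ
      by_cases hxA : x ∈ A
      · exact ⟨x, hxA, .refl⟩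
      have hcQ : c ∉ Q := fun hcQ => hxQ (mem_compIn_of_adj hb hcQ hxc.symm hxA)
      obtain ⟨a, ha, hca⟩ := ih hy hcQ
      exact ⟨a, ha, .head ⟨hxc, hxQ, hcQ⟩ hca⟩
  have hQc : ∀ x ∈ Qᶜ, ReachIn G Qᶜ x a₀ := fun x hx => by
    obtain ⟨p⟩ := hG.preconnected x a₀
    obtain ⟨a, ha, hxa⟩ := hreach x a₀ p ha₀ hx
    exact hxa.trans ((hAreach a ha a₀ ha₀).mono hAQ)
  refine ⟨⟨a₀, hAQ ha₀⟩, ⟨b, by simpa using mem_compIn_self⟩,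
    induce_connected_iff.2
      ⟨⟨a₀, hAQ ha₀⟩, fun x hx y hy => (hQc x hx).trans (hQc y hy).symm⟩,
    by rw [compl_compl]; exact induce_compIn_connected, hfin⟩

theorem edgeBoundary_compl_compIn_subset (ha : a ∈ Sᶜ) (hb : b ∉ compIn G Sᶜ a) :
    edgeBoundary G (compIn G (compIn G Sᶜ a)ᶜ b)ᶜ ⊆ {p | G.Adj p.1 p.2 ∧ p.2 ∈ S} := by
  rintro ⟨u, v⟩ ⟨huv, hu, hv⟩
  rw [Set.notMem_compl_iff] at hv
  have huA : u ∈ compIn G Sᶜ a :=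
    by_contra fun huA => hu (mem_compIn_of_adj hb hv huv.symm huA)
  exact ⟨huv, by_contra fun hvS => compIn_subset hb hv (mem_compIn_of_adj ha huA huv hvS)⟩

theorem ncard_adj_mem_le (hS : S.Finite)
    (hd : ∀ v, (G.neighborSet v).Finite ∧ (G.neighborSet v).ncard ≤ d) :
    {p : V × V | G.Adj p.1 p.2 ∧ p.2 ∈ S}.Finite ∧
      {p : V × V | G.Adj p.1 p.2 ∧ p.2 ∈ S}.ncard ≤ S.ncard * d := by
  have hunion : {p : V × V | G.Adj p.1 p.2 ∧ p.2 ∈ S} = ⋃ v ∈ S, G.neighborSet v ×ˢ {v} := by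
    ext ⟨u, v⟩
    simp [SimpleGraph.adj_comm, and_comm]
  rw [hunion]
  refine ⟨hS.biUnion fun v _ => (hd v).1.prod (Set.finite_singleton v), ?_⟩
  calc (⋃ v ∈ S, G.neighborSet v ×ˢ {v}).ncard
      = (⋃ v ∈ hS.toFinset, G.neighborSet v ×ˢ {v}).ncard := by simp
    _ ≤ ∑ v ∈ hS.toFinset, (G.neighborSet v ×ˢ {v}).ncard :=
        hS.toFinset.set_ncard_biUnion_le _
    _ ≤ hS.toFinset.card • d := Finset.sum_le_card_nsmul _ _ _ fun v _ => by
        rw [Set.ncard_prod, Set.ncard_singleton, mul_one]; exact (hd v).2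
    _ = S.ncard * d := by rw [smul_eq_mul, Set.ncard_eq_toFinset_card _ hS]

theorem exists_cut_of_not_tailsJoined {α : ℤ → V} (hG : G.Connected)
    (hd : ∀ v, (G.neighborSet v).Finite ∧ (G.neighborSet v).ncard ≤ d)
    (hα : IsBiInfinitePath G α) (hS : S.Finite) (h : ¬ TailsJoined G α S) :
    ∃ C ∈ cutsSplitting G α, weight G C ≤ S.ncard * d := by
  have hfar : ∀ᶠ i in cofinite, α i ∈ Sᶜ :=
    hα.1.tendsto_cofinite.eventually hS.compl_mem_cofinite
  rw [Int.cofinite_eq, eventually_sup] at hfar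
  obtain ⟨a, ha, hup⟩ := exists_eventually_atTop_mem_compIn hα.2 hfar.2
  set A := compIn G Sᶜ a
  -- otherwise both tails of `α` would end up in the component `A` of `G - S`
  have hdown : ∀ᶠ i in atBot, α i ∈ Aᶜ := by
    obtain ⟨b, -, hdown⟩ := exists_eventually_atBot_mem_compIn hα.2 hfar.1
    refine hdown.mono fun i hi hiA => h ⟨a, ha, ?_⟩
    rw [Int.cofinite_eq, eventually_sup]
    exact ⟨hdown.mono fun j hj => ReachIn.trans hiA ((ReachIn.symm hi).trans hj), hup⟩
  obtain ⟨b, hb, hQ⟩ := exists_eventually_atBot_mem_compIn hα.2 hdown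
  set Q := compIn G Aᶜ b
  have hAQ : A ⊆ Qᶜ := fun x hxA hxQ => compIn_subset hb hxQ hxA
  have hδ := edgeBoundary_compl_compIn_subset ha hb
  obtain ⟨hfin, hcard⟩ := ncard_adj_mem_le hS hd
  refine ⟨Qᶜ, ⟨isCut_compl_compIn hG induce_compIn_connected hb (hfin.subset hδ), ?_, ?_⟩,
    (Set.ncard_le_ncard hδ hfin).trans hcard⟩
  · exact infinite_range_inter hα.1
      ((hup.mono fun i hi => hAQ hi).frequently.filter_mono atTop_le_cofinite)
  · rw [compl_compl]
    exact infinite_range_inter hα.1 (hQ.frequently.filter_mono atBot_le_cofinite)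

end Cuts

section TreeDecomp

variable {V T : Type u} {G : SimpleGraph V} {tr : SimpleGraph T} {X : T → Set V}
  {s s' t : T} {v x y : V}

theorem IsTreeDecomp.reachIn_of_mem (htd : IsTreeDecomp G tr X) (hv : v ∉ X t)
    (hs : v ∈ X s) (hs' : v ∈ X s') : ReachIn tr {t}ᶜ s s' :=
  ((induce_connected_iff.1 (htd.2.2.2 v)).2 s hs s' hs').mono fun _ hr hrt =>
    hv (Set.mem_singleton_iff.1 hrt ▸ hr)

theorem IsTreeDecomp.reachIn_of_reachIn (htd : IsTreeDecomp G tr X)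
    (h : ReachIn G (X t)ᶜ x y) (hx : x ∉ X t) (hs : x ∈ X s) (hs' : y ∈ X s') :
    ReachIn tr {t}ᶜ s s' := by
  induction h generalizing s' with
  | refl => exact htd.reachIn_of_mem hx hs hs'
  | tail _ hcd ih =>
    obtain ⟨r, hc, hd⟩ := htd.2.2.1 _ _ hcd.1
    exact (ih hc).trans (htd.reachIn_of_mem hcd.2.2 hd hs')

theorem IsTreeDecomp.tailsJoined (htd : IsTreeDecomp G tr X) {α : ℤ → V} {F : Set V}
    (h : ∀ t, TailsJoined G α (X t)) (hF : F.Finite) : TailsJoined G α F := by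
  choose a ha hK using h
  choose bag hbag using htd.2.1
  have hproj (t : T) (v : V) (hv : v ∈ compIn G (X t)ᶜ (a t)) :
      bag v ∈ compIn tr {t}ᶜ (bag (a t)) :=
    htd.reachIn_of_reachIn hv (ha t) (hbag _) (hbag v)
  obtain ⟨τ, hτ⟩ := exists_seq_finite_setOf_mem_compIn (b := fun t => bag (a t)) htd.1
    (fun t ht => ha t (by convert hbag (a t); exact ht.symm)) fun t t' => by
      obtain ⟨i, hi, hi'⟩ := ((hK t).and (hK t')).exists
      exact ⟨bag (α i), hproj t _ hi, hproj t' _ hi'⟩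
  obtain ⟨n, hn⟩ : ∃ n, ∀ v ∈ F, v ∉ compIn G (X (τ n))ᶜ (a (τ n)) := by
    by_contra! hmeet
    refine Set.infinite_univ ((hF.biUnion fun v _ => hτ (bag v)).subset fun n _ => ?_)
    obtain ⟨v, hv, hvK⟩ := hmeet n
    exact Set.mem_biUnion hv (hproj _ v hvK)
  refine ⟨a (τ n), fun haF => hn _ haF mem_compIn_self, (hK (τ n)).mono fun i hi => ?_⟩
  exact (reachIn_compIn hi).mono fun v hv hvF => hn v hvF hv

end TreeDecomp

end CFGroups

open CFGroups Pointwise in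
/-- A connected graph of finite treewidth and uniformly bounded degree
is accessible. -/
theorem finite_treewidth_accessible
    {V : Type u} (G : SimpleGraph V) (hconn : G.Connected)
    (htw : CFGroups.FiniteTreewidth G) (hdeg : CFGroups.UnifBoundedDegree G) :
    CFGroups.Accessible G := by
  obtain ⟨w, T, tr, X, htd, hX⟩ := htw
  obtain ⟨d, hd⟩ := hdeg
  refine ⟨(w + 1) * d, fun α hα ⟨C, hC⟩ => ?_⟩
  obtain ⟨t, ht⟩ : ∃ t, ¬ TailsJoined G α (X t) := by
    by_contra! h
    exact not_tailsJoined_vertexBoundary hC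
      (htd.tailsJoined h (vertexBoundary_finite hC.1.2.2.2.2))
  obtain ⟨D, hD, hwt⟩ := exists_cut_of_not_tailsJoined hconn hd hα (hX t).1 ht
  exact ⟨D, hD, hwt.trans (Nat.mul_le_mul_right d (hX t).2)⟩
end
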